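/- Let O(2)⁻ = SO(2) ∪ (-γ·SO(2)) with γ = R(e₁, π), a type III subgroup of O(3). For any integer m ≥ 2 and d₂' = gcd(2,m): the clips operation [O(2)⁻] ⊚ [Zₘ ⊕ Z₂ᶜ] equals {[1], [Zₘ], [Z_{d₂'}⁻]}, i.e., the only subgroups arising as O(2)⁻ ∩ g(Zₘ ∪ -Zₘ)g⁻¹ up to conjugacy are the trivial group, Zₘ, and (when m is even) Z₂⁻ = {I, -R(e₃,π)}. -/

import Mathlib

open Matrix
open scoped Real Pointwise

abbrev O3 := Matrix.orthogonalGroup (Fin 3) ℝ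

def SO3 : Subgroup O3 where
  carrier := {A | (A : Matrix (Fin 3) (Fin 3) ℝ).det = 1}
  one_mem' := by simp
  mul_mem' := by
    intro a b ha hb
    simp only [Set.mem_setOf_eq] at *
    rw [Submonoid.coe_mul, Matrix.det_mul, ha, hb, one_mul]
  inv_mem' := by
    intro a ha
    simp only [Set.mem_setOf_eq] at *
    have h : ((a⁻¹ : O3) : Matrix (Fin 3) (Fin 3) ℝ) = star (a : Matrix (Fin 3) (Fin 3) ℝ) := rfl
    rw [h, Matrix.star_eq_conjTranspose, Matrix.det_conjTranspose]; simpa using ha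

def negI : O3 := ⟨-1, by constructor <;> simp⟩

lemma negI_mul_comm (x : O3) : negI * x = x * negI := Subtype.ext <| by
  show (-1 : Matrix (Fin 3) (Fin 3) ℝ) * x = (x : Matrix (Fin 3) (Fin 3) ℝ) * (-1)
  simp

lemma negI_sq : negI * negI = 1 := Subtype.ext <| by
  show (-1 : Matrix (Fin 3) (Fin 3) ℝ) * (-1) = 1
  simp

/-- `-S = {-g : g ∈ S}` -/
def negSet (S : Set O3) : Set O3 := (fun x => negI * x) '' S

def HZ (H : Subgroup O3) : Subgroup O3 where
  carrier := (H : Set O3) ∪ negSet (H : Set O3)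
  one_mem' := Or.inl H.one_mem
  mul_mem' := by
    rintro a b (ha | ⟨a', ha', rfl⟩) (hb | ⟨b', hb', rfl⟩)
    · exact Or.inl (H.mul_mem ha hb)
    · exact Or.inr ⟨a * b', H.mul_mem ha hb', by rw [← mul_assoc, ← negI_mul_comm, mul_assoc]⟩
    · exact Or.inr ⟨a' * b, H.mul_mem ha' hb, by rw [mul_assoc]⟩
    · refine Or.inl ?_
      have h : negI * a' * (negI * b') = a' * b' := by
        rw [negI_mul_comm a', mul_assoc a', ← mul_assoc negI, negI_sq, one_mul]
      rw [h]; exact H.mul_mem ha' hb'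
  inv_mem' := by
    rintro a (ha | ⟨a', ha', rfl⟩)
    · exact Or.inl (H.inv_mem ha)
    · refine Or.inr ⟨a'⁻¹, H.inv_mem ha', ?_⟩
      show negI * a'⁻¹ = (negI * a')⁻¹
      have hinv : negI⁻¹ = negI := by
        rw [eq_comm, eq_inv_iff_mul_eq_one, negI_sq]
      rw [_root_.mul_inv_rev, hinv, ← negI_mul_comm a'⁻¹]

noncomputable def RzM (θ : ℝ) : Matrix (Fin 3) (Fin 3) ℝ :=
  !![Real.cos θ, -Real.sin θ, 0; Real.sin θ, Real.cos θ, 0; 0, 0, 1]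

lemma RzM_mem (θ : ℝ) : RzM θ ∈ Matrix.orthogonalGroup (Fin 3) ℝ := by
  constructor
  · ext i j
    fin_cases i <;> fin_cases j <;>
      simp [RzM, Matrix.mul_apply, Fin.sum_univ_succ, Matrix.one_apply, mul_comm] <;>
      nlinarith [Real.sin_sq_add_cos_sq θ]
  · ext i j
    fin_cases i <;> fin_cases j <;>
      simp [RzM, Matrix.mul_apply, Fin.sum_univ_succ, Matrix.one_apply, mul_comm] <;>
      nlinarith [Real.sin_sq_add_cos_sq θ]

noncomputable def Rz (θ : ℝ) : O3 := ⟨RzM θ, RzM_mem θ⟩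

def e1 : Fin 3 → ℝ := ![1, 0, 0]
def e2 : Fin 3 → ℝ := ![0, 1, 0]
def e3 : Fin 3 → ℝ := ![0, 0, 1]

/-- rotation by `π` about the unit axis `u` (Rodrigues: `2uuᵀ - I`) -/
noncomputable def RpiM (u : Fin 3 → ℝ) : Matrix (Fin 3) (Fin 3) ℝ :=
  (2 : ℝ) • Matrix.vecMulVec u u - 1

lemma RpiM_mem (u : Fin 3 → ℝ) (hu : u ⬝ᵥ u = 1) :
    RpiM u ∈ Matrix.orthogonalGroup (Fin 3) ℝ := by
  have h3 : u 0 * u 0 + u 1 * u 1 + u 2 * u 2 = 1 := by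
    simpa [dotProduct, Fin.sum_univ_three] using hu
  have key : RpiM u * RpiM u = 1 := by
    ext i j
    simp only [RpiM, Matrix.mul_apply, Matrix.sub_apply, Matrix.smul_apply,
      Matrix.vecMulVec_apply, smul_eq_mul, Fin.sum_univ_three]
    fin_cases i <;> fin_cases j <;> simp [Matrix.one_apply] <;>
      first
        | linear_combination (4 * u 0 * u 0) * h3
        | linear_combination (4 * u 1 * u 1) * h3
        | linear_combination (4 * u 2 * u 2) * h3
        | linear_combination (4 * u 0 * u 1) * h3
        | linear_combination (4 * u 0 * u 2) * h3
        | linear_combination (4 * u 1 * u 2) * h3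
  have hsym : star (RpiM u) = RpiM u := by
    rw [Matrix.star_eq_conjTranspose]
    ext i j
    by_cases h : i = j
    · subst h; simp [RpiM, Matrix.conjTranspose_apply, Matrix.vecMulVec_apply]
    · simp [RpiM, Matrix.conjTranspose_apply, Matrix.vecMulVec_apply, Matrix.one_apply, h,
        Ne.symm h]
      ring
  exact ⟨by rw [hsym]; exact key, by rw [hsym]; exact key⟩

noncomputable def Rpi (u : Fin 3 → ℝ) (hu : u ⬝ᵥ u = 1) : O3 := ⟨RpiM u, RpiM_mem u hu⟩

def conjS (g : O3) (H : Subgroup O3) : Subgroup O3 := H.map (MulAut.conj g).toMonoidHom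

def cclass (H : Subgroup O3) : Set (Subgroup O3) := Set.range fun g : O3 => conjS g H

def clips (H K : Subgroup O3) : Set (Set (Subgroup O3)) :=
  Set.range fun g : O3 => cclass (H ⊓ conjS g K)

def conjSet (g : O3) (S : Set O3) : Set O3 := (fun x => g * x * g⁻¹) '' S

lemma e1_unit : e1 ⬝ᵥ e1 = 1 := by norm_num [e1, dotProduct, Fin.sum_univ_three, Matrix.cons_val_two, Matrix.tail_cons, Matrix.head_cons]
lemma e2_unit : e2 ⬝ᵥ e2 = 1 := by norm_num [e2, dotProduct, Fin.sum_univ_three, Matrix.cons_val_two, Matrix.tail_cons, Matrix.head_cons]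
lemma e3_unit : e3 ⬝ᵥ e3 = 1 := by norm_num [e3, dotProduct, Fin.sum_univ_three, Matrix.cons_val_two, Matrix.tail_cons, Matrix.head_cons]

lemma coe_mul (a b : O3) : ((a * b : O3) : Matrix (Fin 3) (Fin 3) ℝ) = (a : Matrix (Fin 3) (Fin 3) ℝ) * b := rfl

lemma coe_inv (a : O3) : ((a⁻¹ : O3) : Matrix (Fin 3) (Fin 3) ℝ) = star (a : Matrix (Fin 3) (Fin 3) ℝ) := rfl

lemma Rz_mul (a b : ℝ) : Rz a * Rz b = Rz (a + b) := Subtype.ext <| by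
  show RzM a * RzM b = RzM (a + b)
  ext i j
  fin_cases i <;> fin_cases j <;>
    simp [RzM, Matrix.mul_apply, Fin.sum_univ_three, Real.cos_add, Real.sin_add] <;> ring

lemma Rz_zero : Rz 0 = 1 := Subtype.ext <| by
  show RzM 0 = 1
  ext i j
  fin_cases i <;> fin_cases j <;> simp [RzM, Matrix.one_apply] <;> rfl

lemma Rz_zpow (θ : ℝ) (k : ℤ) : Rz θ ^ k = Rz (k * θ) := by
  have hnat : ∀ n : ℕ, Rz θ ^ n = Rz (n * θ) := by
    intro n
    induction n with
    | zero => simp [Rz_zero]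
    | succ n ih => rw [pow_succ, ih, Rz_mul]; congr 1; push_cast; ring
  induction k using Int.rec with
  | ofNat n => simpa using hnat n
  | negSucc n =>
      have h2 : Rz θ ^ (Int.negSucc n) = (Rz θ ^ (n+1 : ℕ))⁻¹ := zpow_negSucc _ _
      rw [h2, hnat]
      refine inv_eq_of_mul_eq_one_left ?_
      rw [Rz_mul, ← Rz_zero]
      congr 1
      push_cast [Int.negSucc_eq]
      ring

lemma RzM_mulVec (θ : ℝ) (v : Fin 3 → ℝ) :
    RzM θ *ᵥ v = ![Real.cos θ * v 0 - Real.sin θ * v 1,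
      Real.sin θ * v 0 + Real.cos θ * v 1, v 2] := by
  ext i
  fin_cases i <;> simp [RzM, Matrix.mulVec, dotProduct, Fin.sum_univ_three] <;> ring
lemma exists_cos_sin (a c : ℝ) (h : a ^ 2 + c ^ 2 = 1) :
    ∃ θ : ℝ, Real.cos θ = a ∧ Real.sin θ = c := by
  have ha1 : -1 ≤ a := by nlinarith
  have ha2 : a ≤ 1 := by nlinarith
  rcases le_or_gt 0 c with hc | hc
  · refine ⟨Real.arccos a, Real.cos_arccos ha1 ha2, ?_⟩
    rw [Real.sin_arccos, show 1 - a ^ 2 = c ^ 2 by linarith, Real.sqrt_sq hc]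
  · refine ⟨-Real.arccos a, by rw [Real.cos_neg]; exact Real.cos_arccos ha1 ha2, ?_⟩
    rw [Real.sin_neg, Real.sin_arccos, show 1 - a ^ 2 = c ^ 2 by linarith,
      Real.sqrt_sq_eq_abs, abs_of_neg hc, neg_neg]

lemma reflM (θ : ℝ) : ((negI * Rpi e1 e1_unit * Rz θ : O3) : Matrix (Fin 3) (Fin 3) ℝ) =
    !![-Real.cos θ, Real.sin θ, 0; Real.sin θ, Real.cos θ, 0; 0, 0, 1] := by
  show (-1 : Matrix (Fin 3) (Fin 3) ℝ) * RpiM e1 * RzM θ = _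
  ext i j
  fin_cases i <;> fin_cases j <;>
    simp [RpiM, RzM, Matrix.mul_apply, Fin.sum_univ_three, Matrix.vecMulVec_apply, e1,
      Matrix.one_apply] <;> ring

lemma sq_sum_zero {p q : ℝ} (h : p ^ 2 + q ^ 2 = 0) : p = 0 ∧ q = 0 := by
  have hp : p ^ 2 = 0 := le_antisymm (by nlinarith [sq_nonneg q]) (sq_nonneg p)
  have hq : q ^ 2 = 0 := le_antisymm (by nlinarith [sq_nonneg p]) (sq_nonneg q)
  exact ⟨pow_eq_zero_iff two_ne_zero |>.mp hp, pow_eq_zero_iff two_ne_zero |>.mp hq⟩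

lemma mem_Gamma_iff {SO2 : Subgroup O3} (hSO2 : (SO2 : Set O3) = Set.range Rz)
    {Γ : Subgroup O3}
    (hΓ : (Γ : Set O3) = ↑SO2 ∪ (fun x => negI * Rpi e1 e1_unit * x) '' ↑SO2)
    (x : O3) : x ∈ Γ ↔ (x : Matrix (Fin 3) (Fin 3) ℝ) *ᵥ e3 = e3 := by
  have hmem : x ∈ Γ ↔ (∃ θ, Rz θ = x) ∨ (∃ θ, negI * Rpi e1 e1_unit * Rz θ = x) := by
    rw [← SetLike.mem_coe, hΓ, Set.mem_union, hSO2]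
    constructor
    · rintro (⟨θ, rfl⟩ | ⟨s, hs, rfl⟩)
      · exact Or.inl ⟨θ, rfl⟩
      · obtain ⟨θ, rfl⟩ := hs
        exact Or.inr ⟨θ, rfl⟩
    · rintro (⟨θ, rfl⟩ | ⟨θ, rfl⟩)
      · exact Or.inl ⟨θ, rfl⟩
      · exact Or.inr ⟨Rz θ, ⟨θ, rfl⟩, rfl⟩
  rw [hmem]
  obtain ⟨A, hA2⟩ := x
  constructor
  · intro hx
    rcases hx with ⟨θ, hθ⟩ | ⟨θ, hθ⟩
    · show A *ᵥ e3 = e3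
      have : A = RzM θ := congrArg Subtype.val hθ.symm
      rw [this, RzM_mulVec]
      ext i; fin_cases i <;> simp [e3]
    · have : A = !![-Real.cos θ, Real.sin θ, 0; Real.sin θ, Real.cos θ, 0; 0, 0, 1] := by
        rw [← reflM θ]; exact congrArg Subtype.val hθ.symm
      show A *ᵥ e3 = e3
      rw [this]
      ext i; fin_cases i <;>
        simp [Matrix.mulVec, dotProduct, Fin.sum_univ_three, e3]
  · intro hfix
    have hfix' : A *ᵥ e3 = e3 := hfix
    have hc2 : ∀ i, A i 2 = e3 i := by
      intro i
      have := congrFun hfix' i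
      simpa [Matrix.mulVec, dotProduct, Fin.sum_univ_three, e3] using this
    have h02 : A 0 2 = 0 := hc2 0
    have h12 : A 1 2 = 0 := hc2 1
    have h22 : A 2 2 = 1 := hc2 2
    have h1 : star A * A = 1 := hA2.1
    have h2 : A * star A = 1 := hA2.2
    have hrow : A 2 0 * A 2 0 + A 2 1 * A 2 1 + A 2 2 * A 2 2 = 1 := by
      have := congrFun (congrFun h2 2) 2
      simpa [Matrix.mul_apply, Matrix.star_apply, Fin.sum_univ_three, Matrix.one_apply]
        using this
    have h20 : A 2 0 = 0 := by nlinarith [sq_nonneg (A 2 0), sq_nonneg (A 2 1)]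
    have h21 : A 2 1 = 0 := by nlinarith [sq_nonneg (A 2 0), sq_nonneg (A 2 1)]
    have hcol : ∀ i j : Fin 3, (star A * A) i j = (1 : Matrix (Fin 3) (Fin 3) ℝ) i j :=
      fun i j => congrFun (congrFun h1 i) j
    have hac : A 0 0 * A 0 0 + A 1 0 * A 1 0 = 1 := by
      have := hcol 0 0
      simp only [Matrix.mul_apply, Matrix.star_apply, Fin.sum_univ_three, Matrix.one_apply,
        star_trivial] at this
      rw [h20] at this; norm_num at this; linarith [this]
    have hbd : A 0 1 * A 0 1 + A 1 1 * A 1 1 = 1 := by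
      have := hcol 1 1
      simp only [Matrix.mul_apply, Matrix.star_apply, Fin.sum_univ_three, Matrix.one_apply,
        star_trivial] at this
      rw [h21] at this; norm_num at this; linarith [this]
    have hab : A 0 0 * A 0 1 + A 1 0 * A 1 1 = 0 := by
      have := hcol 0 1
      simp only [Matrix.mul_apply, Matrix.star_apply, Fin.sum_univ_three, Matrix.one_apply,
        star_trivial] at this
      rw [h20, h21] at this; norm_num at this
      simpa using this
    have hdet : (A 0 0 * A 1 1 - A 0 1 * A 1 0 - 1) * (A 0 0 * A 1 1 - A 0 1 * A 1 0 + 1) = 0 := by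
      linear_combination (A 0 1 * A 0 1 + A 1 1 * A 1 1) * hac + hbd -
        (A 0 0 * A 0 1 + A 1 0 * A 1 1) * hab
    rcases mul_eq_zero.mp hdet with hd1 | hd2
    · -- rotation case
      have hz : (A 0 1 + A 1 0) ^ 2 + (A 1 1 - A 0 0) ^ 2 = 0 := by
        linear_combination hac + hbd - 2 * hd1
      obtain ⟨hz1, hz2⟩ := sq_sum_zero hz
      have hb : A 0 1 = -(A 1 0) := by linarith
      have hdd : A 1 1 = A 0 0 := by linarith
      obtain ⟨θ, hcos, hsin⟩ := exists_cos_sin (A 0 0) (A 1 0) (by linear_combination hac)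
      refine Or.inl ⟨θ, Subtype.ext ?_⟩
      show RzM θ = A
      ext i j
      fin_cases i <;> fin_cases j <;>
        simp [RzM, hcos, hsin, hb, hdd, h02, h12, h22, h20, h21]
    · -- reflection case
      have hz : (A 0 1 - A 1 0) ^ 2 + (A 1 1 + A 0 0) ^ 2 = 0 := by
        linear_combination hac + hbd + 2 * hd2
      obtain ⟨hz1, hz2⟩ := sq_sum_zero hz
      have hb : A 0 1 = A 1 0 := by linarith
      have hdd : A 1 1 = -(A 0 0) := by linarith
      obtain ⟨θ, hcos, hsin⟩ := exists_cos_sin (-(A 0 0)) (A 1 0) (by linear_combination hac)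
      refine Or.inr ⟨θ, Subtype.ext ?_⟩
      rw [reflM]
      ext i j
      fin_cases i <;> fin_cases j <;>
        simp [hcos, hsin, hb, hdd, h02, h12, h22, h20, h21]
lemma mem_HZ_iff (H : Subgroup O3) (x : O3) :
    x ∈ HZ H ↔ x ∈ H ∨ ∃ y ∈ H, negI * y = x := by
  constructor
  · rintro (h | ⟨y, hy, rfl⟩)
    · exact Or.inl h
    · exact Or.inr ⟨y, hy, rfl⟩
  · rintro (h | ⟨y, hy, rfl⟩)
    · exact Or.inl h
    · exact Or.inr ⟨y, hy, rfl⟩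

lemma mem_conjS_iff (g : O3) (H : Subgroup O3) (x : O3) :
    x ∈ conjS g H ↔ ∃ y ∈ H, g * y * g⁻¹ = x := by
  simp [conjS, Subgroup.mem_map, MulAut.conj_apply]

lemma conjS_conjS (g h : O3) (B : Subgroup O3) : conjS g (conjS h B) = conjS (g * h) B := by
  ext x
  simp only [mem_conjS_iff]
  constructor
  · rintro ⟨y, ⟨z, hz, rfl⟩, rfl⟩
    exact ⟨z, hz, by group⟩
  · rintro ⟨y, hy, rfl⟩
    exact ⟨h * y * h⁻¹, ⟨y, hy, rfl⟩, by group⟩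

lemma cclass_conjS (h : O3) (B : Subgroup O3) : cclass (conjS h B) = cclass B := by
  unfold cclass
  ext S
  constructor
  · rintro ⟨g, rfl⟩
    exact ⟨g * h, (conjS_conjS g h B).symm⟩
  · rintro ⟨g, rfl⟩
    refine ⟨g * h⁻¹, ?_⟩
    show conjS (g * h⁻¹) (conjS h B) = conjS g B
    rw [conjS_conjS]; simp

lemma fix_analysis {θ : ℝ} {v : Fin 3 → ℝ} (h : RzM θ *ᵥ v = v)
    (hcos : Real.cos θ ≠ 1) : v 0 = 0 ∧ v 1 = 0 := by
  rw [RzM_mulVec] at h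
  have h0 : Real.cos θ * v 0 - Real.sin θ * v 1 = v 0 := by
    have := congrFun h 0; simpa using this
  have h1 : Real.sin θ * v 0 + Real.cos θ * v 1 = v 1 := by
    have := congrFun h 1; simpa using this
  have key : (1 - Real.cos θ) * (v 0 ^ 2 + v 1 ^ 2) = 0 := by
    linear_combination (-(v 0)) * h0 + (-(v 1)) * h1
  have hne : 1 - Real.cos θ ≠ 0 := fun hc => hcos (by linarith [hc])
  exact sq_sum_zero ((mul_eq_zero.mp key).resolve_left hne)

lemma antifix_analysis {θ : ℝ} {v : Fin 3 → ℝ} (h : RzM θ *ᵥ v = -v) :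
    v 2 = 0 ∧ (Real.cos θ = -1 ∨ (v 0 = 0 ∧ v 1 = 0)) := by
  rw [RzM_mulVec] at h
  have h0 : Real.cos θ * v 0 - Real.sin θ * v 1 = -(v 0) := by
    have := congrFun h 0; simpa using this
  have h1 : Real.sin θ * v 0 + Real.cos θ * v 1 = -(v 1) := by
    have := congrFun h 1; simpa using this
  have h2 : v 2 = -(v 2) := by
    have := congrFun h 2; simpa using this
  refine ⟨by linarith, ?_⟩
  have key : (1 + Real.cos θ) * (v 0 ^ 2 + v 1 ^ 2) = 0 := by
    linear_combination (v 0) * h0 + (v 1) * h1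
  rcases mul_eq_zero.mp key with hc | hv
  · exact Or.inl (by linarith)
  · exact Or.inr (sq_sum_zero hv)

lemma sin_eq_zero_of_cos_eq_one {x : ℝ} (h : Real.cos x = 1) : Real.sin x = 0 := by
  have := Real.sin_sq_add_cos_sq x
  have hs : Real.sin x ^ 2 = 0 := by rw [h] at this; linarith
  exact pow_eq_zero_iff two_ne_zero |>.mp hs

lemma sin_eq_zero_of_cos_eq_neg_one {x : ℝ} (h : Real.cos x = -1) : Real.sin x = 0 := by
  have := Real.sin_sq_add_cos_sq x
  have hs : Real.sin x ^ 2 = 0 := by rw [h] at this; nlinarith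
  exact pow_eq_zero_iff two_ne_zero |>.mp hs

lemma Rz_eq_one_of_cos {x : ℝ} (h : Real.cos x = 1) : Rz x = 1 := by
  have hs := sin_eq_zero_of_cos_eq_one h
  refine Subtype.ext ?_
  show RzM x = 1
  ext i j
  fin_cases i <;> fin_cases j <;> simp [RzM, h, hs, Matrix.one_apply] <;> rfl

lemma Rz_eq_pi_of_cos {x : ℝ} (h : Real.cos x = -1) : Rz x = Rz Real.pi := by
  have hs := sin_eq_zero_of_cos_eq_neg_one h
  refine Subtype.ext ?_
  show RzM x = RzM Real.pi
  ext i j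
  fin_cases i <;> fin_cases j <;> simp [RzM, h, hs, Real.cos_pi, Real.sin_pi]

lemma odd_no_cos_neg_one {m : ℕ} (hm : 2 ≤ m) (hodd : ¬ Even m) (k : ℤ) :
    Real.cos ((k : ℝ) * (2 * Real.pi / (m : ℝ))) ≠ -1 := by
  intro h
  obtain ⟨n, hn⟩ := Real.cos_eq_neg_one_iff.mp h
  have hm0 : (m : ℝ) ≠ 0 := by positivity
  have hpi : Real.pi ≠ 0 := Real.pi_ne_zero
  have hpieq : Real.pi * (2 * k : ℝ) = Real.pi * ((m : ℝ) * (2 * n + 1)) := by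
    field_simp at hn
    linear_combination (-Real.pi) * hn
  have : (2 * k : ℝ) = (m : ℝ) * (2 * n + 1) := mul_left_cancel₀ hpi hpieq
  have hint : (2 * k : ℤ) = (m : ℤ) * (2 * n + 1) := by exact_mod_cast this
  have : Even ((m : ℤ) * (2 * n + 1)) := ⟨k, by rw [← hint]; ring⟩
  rw [Int.even_mul] at this
  rcases this with hev | hev
  · exact hodd (by exact_mod_cast hev)
  · rcases hev with ⟨r, hr⟩; omega
/-- the image of `e₃` under `g⁻¹` -/
noncomputable def axisV (g : O3) : Fin 3 → ℝ :=
  ((g⁻¹ : O3) : Matrix (Fin 3) (Fin 3) ℝ) *ᵥ e3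

lemma coe_mul_inv (g : O3) :
    (g : Matrix (Fin 3) (Fin 3) ℝ) * ((g⁻¹ : O3) : Matrix (Fin 3) (Fin 3) ℝ) = 1 := by
  rw [← coe_mul, mul_inv_cancel]; rfl

lemma coe_inv_mul (g : O3) :
    ((g⁻¹ : O3) : Matrix (Fin 3) (Fin 3) ℝ) * (g : Matrix (Fin 3) (Fin 3) ℝ) = 1 := by
  rw [← coe_mul, inv_mul_cancel]; rfl

lemma mulVec_cancel (g : O3) {w w' : Fin 3 → ℝ}
    (h : (g : Matrix (Fin 3) (Fin 3) ℝ) *ᵥ w = (g : Matrix (Fin 3) (Fin 3) ℝ) *ᵥ w') :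
    w = w' := by
  have h2 := congrArg (fun u => ((g⁻¹ : O3) : Matrix (Fin 3) (Fin 3) ℝ) *ᵥ u) h
  simpa [Matrix.mulVec_mulVec, coe_inv_mul, Matrix.one_mulVec] using h2

lemma g_axisV (g : O3) : (g : Matrix (Fin 3) (Fin 3) ℝ) *ᵥ axisV g = e3 := by
  rw [axisV, Matrix.mulVec_mulVec, coe_mul_inv, Matrix.one_mulVec]

lemma axisV_unit (g : O3) : axisV g 0 ^ 2 + axisV g 1 ^ 2 + axisV g 2 ^ 2 = 1 := by
  set B := ((g⁻¹ : O3) : Matrix (Fin 3) (Fin 3) ℝ) with hB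
  have hBo : star B * B = 1 := (g⁻¹ : O3).prop.1
  have hv : ∀ i, axisV g i = B i 2 := by
    intro i
    simp [axisV, Matrix.mulVec, dotProduct, Fin.sum_univ_three, e3, ← hB]
  have h22 := congrFun (congrFun hBo 2) 2
  simp only [Matrix.mul_apply, Matrix.star_apply, Fin.sum_univ_three, Matrix.one_apply,
    star_trivial] at h22
  rw [hv 0, hv 1, hv 2]
  norm_num at h22
  nlinarith [h22]

lemma conj_fix (g y : O3) :
    ((g * y * g⁻¹ : O3) : Matrix (Fin 3) (Fin 3) ℝ) *ᵥ e3 = e3 ↔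
      (y : Matrix (Fin 3) (Fin 3) ℝ) *ᵥ axisV g = axisV g := by
  have hmul : ((g * y * g⁻¹ : O3) : Matrix (Fin 3) (Fin 3) ℝ) *ᵥ e3 =
      (g : Matrix (Fin 3) (Fin 3) ℝ) *ᵥ ((y : Matrix (Fin 3) (Fin 3) ℝ) *ᵥ axisV g) := by
    rw [coe_mul, coe_mul, axisV]
    simp [Matrix.mulVec_mulVec, Matrix.mul_assoc]
  rw [hmul]
  constructor
  · intro h
    refine mulVec_cancel g ?_
    rw [h, g_axisV]
  · intro h
    rw [h, g_axisV]

lemma coe_negI_mul (y : O3) :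
    ((negI * y : O3) : Matrix (Fin 3) (Fin 3) ℝ) = -(y : Matrix (Fin 3) (Fin 3) ℝ) := by
  rw [coe_mul]
  show (-1 : Matrix (Fin 3) (Fin 3) ℝ) * _ = _
  simp

lemma conj_antifix (g y : O3) :
    ((g * (negI * y) * g⁻¹ : O3) : Matrix (Fin 3) (Fin 3) ℝ) *ᵥ e3 = e3 ↔
      (y : Matrix (Fin 3) (Fin 3) ℝ) *ᵥ axisV g = -axisV g := by
  have hmul : ((g * (negI * y) * g⁻¹ : O3) : Matrix (Fin 3) (Fin 3) ℝ) *ᵥ e3 =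
      (g : Matrix (Fin 3) (Fin 3) ℝ) *ᵥ (((negI * y : O3) : Matrix (Fin 3) (Fin 3) ℝ) *ᵥ axisV g) := by
    rw [coe_mul, coe_mul, axisV]
    simp [Matrix.mulVec_mulVec, Matrix.mul_assoc]
  rw [hmul, coe_negI_mul, Matrix.neg_mulVec]
  constructor
  · intro h
    have := mulVec_cancel g (by rw [h, g_axisV] :
      (g : Matrix (Fin 3) (Fin 3) ℝ) *ᵥ (-((y : Matrix (Fin 3) (Fin 3) ℝ) *ᵥ axisV g)) =
        (g : Matrix (Fin 3) (Fin 3) ℝ) *ᵥ axisV g)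
    simpa using congrArg Neg.neg this
  · intro h
    rw [h, neg_neg, g_axisV]
lemma mem_Z_iff (m : ℕ) (x : O3) :
    x ∈ Subgroup.zpowers (Rz (2 * Real.pi / (m : ℝ))) ↔
      ∃ k : ℤ, Rz ((k : ℝ) * (2 * Real.pi / (m : ℝ))) = x := by
  simp only [Subgroup.mem_zpowers_iff, Rz_zpow]

lemma w_sq : (negI * Rz Real.pi) * (negI * Rz Real.pi) = 1 := by
  have h1 : negI * Rz Real.pi * (negI * Rz Real.pi) =
      negI * negI * (Rz Real.pi * Rz Real.pi) := by
    rw [mul_assoc, ← mul_assoc (Rz Real.pi), ← negI_mul_comm (Rz Real.pi)]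
    group
  rw [h1, negI_sq, one_mul, Rz_mul]
  exact Rz_eq_one_of_cos (by rw [show Real.pi + Real.pi = 2 * Real.pi by ring, Real.cos_two_pi])

lemma mem_W_iff (x : O3) :
    x ∈ Subgroup.zpowers (negI * Rz Real.pi) ↔ x = 1 ∨ x = negI * Rz Real.pi := by
  constructor
  · intro hx
    obtain ⟨k, rfl⟩ := Subgroup.mem_zpowers_iff.mp hx
    set w := negI * Rz Real.pi with hw
    have hw2 : w ^ (2 : ℤ) = 1 := by
      rw [show (2 : ℤ) = 1 + 1 from rfl, _root_.zpow_add, zpow_one, w_sq]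
    rcases Int.even_or_odd k with ⟨q, rfl⟩ | ⟨q, rfl⟩
    · left
      rw [show q + q = 2 * q by ring, _root_.zpow_mul, hw2, _root_.one_zpow]
    · right
      rw [show 2 * q + 1 = 2 * q + 1 from rfl, _root_.zpow_add, _root_.zpow_mul, hw2, _root_.one_zpow, zpow_one,
        one_mul]
  · rintro (rfl | rfl)
    · exact Subgroup.one_mem _
    · exact Subgroup.mem_zpowers _

lemma mem_inter_iff {SO2 : Subgroup O3} (hSO2 : (SO2 : Set O3) = Set.range Rz)
    {Γ : Subgroup O3}
    (hΓ : (Γ : Set O3) = ↑SO2 ∪ (fun x => negI * Rpi e1 e1_unit * x) '' ↑SO2)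
    (m : ℕ) (g x : O3) :
    x ∈ Γ ⊓ conjS g (HZ (Subgroup.zpowers (Rz (2 * Real.pi / (m : ℝ))))) ↔
      ∃ k : ℤ,
        (g * Rz ((k : ℝ) * (2 * Real.pi / (m : ℝ))) * g⁻¹ = x ∧
          RzM ((k : ℝ) * (2 * Real.pi / (m : ℝ))) *ᵥ axisV g = axisV g) ∨
        (g * (negI * Rz ((k : ℝ) * (2 * Real.pi / (m : ℝ)))) * g⁻¹ = x ∧
          RzM ((k : ℝ) * (2 * Real.pi / (m : ℝ))) *ᵥ axisV g = -axisV g) := by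
  rw [Subgroup.mem_inf]
  constructor
  · rintro ⟨hxΓ, hxc⟩
    rw [mem_conjS_iff] at hxc
    obtain ⟨y, hyK, rfl⟩ := hxc
    rw [mem_HZ_iff] at hyK
    rcases hyK with hy | ⟨z, hz, rfl⟩
    · obtain ⟨k, rfl⟩ := (mem_Z_iff m y).mp hy
      exact ⟨k, Or.inl ⟨rfl, (conj_fix g _).mp ((mem_Gamma_iff hSO2 hΓ _).mp hxΓ)⟩⟩
    · obtain ⟨k, rfl⟩ := (mem_Z_iff m z).mp hz
      exact ⟨k, Or.inr ⟨rfl, (conj_antifix g _).mp ((mem_Gamma_iff hSO2 hΓ _).mp hxΓ)⟩⟩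
  · rintro ⟨k, ⟨rfl, hfix⟩ | ⟨rfl, hfix⟩⟩
    · refine ⟨(mem_Gamma_iff hSO2 hΓ _).mpr ((conj_fix g _).mpr hfix), ?_⟩
      rw [mem_conjS_iff]
      exact ⟨_, (mem_HZ_iff _ _).mpr (Or.inl ((mem_Z_iff m _).mpr ⟨k, rfl⟩)), rfl⟩
    · refine ⟨(mem_Gamma_iff hSO2 hΓ _).mpr ((conj_antifix g _).mpr hfix), ?_⟩
      rw [mem_conjS_iff]
      exact ⟨_, (mem_HZ_iff _ _).mpr
        (Or.inr ⟨_, (mem_Z_iff m _).mpr ⟨k, rfl⟩, rfl⟩), rfl⟩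

lemma inter_a {SO2 : Subgroup O3} (hSO2 : (SO2 : Set O3) = Set.range Rz)
    {Γ : Subgroup O3}
    (hΓ : (Γ : Set O3) = ↑SO2 ∪ (fun x => negI * Rpi e1 e1_unit * x) '' ↑SO2)
    (m : ℕ) (g : O3) (h0 : axisV g 0 = 0) (h1 : axisV g 1 = 0) :
    Γ ⊓ conjS g (HZ (Subgroup.zpowers (Rz (2 * Real.pi / (m : ℝ))))) =
      conjS g (Subgroup.zpowers (Rz (2 * Real.pi / (m : ℝ)))) := by
  ext x
  rw [mem_inter_iff hSO2 hΓ m g x, mem_conjS_iff]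
  constructor
  · rintro ⟨k, ⟨rfl, hfix⟩ | ⟨rfl, hfix⟩⟩
    · exact ⟨_, (mem_Z_iff m _).mpr ⟨k, rfl⟩, rfl⟩
    · exfalso
      obtain ⟨hz2, _⟩ := antifix_analysis hfix
      have hu := axisV_unit g
      rw [h0, h1, hz2] at hu
      norm_num at hu
  · rintro ⟨y, hy, rfl⟩
    obtain ⟨k, rfl⟩ := (mem_Z_iff m y).mp hy
    refine ⟨k, Or.inl ⟨rfl, ?_⟩⟩
    rw [RzM_mulVec]
    ext i
    fin_cases i <;> simp [h0, h1]

lemma inter_b {SO2 : Subgroup O3} (hSO2 : (SO2 : Set O3) = Set.range Rz)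
    {Γ : Subgroup O3}
    (hΓ : (Γ : Set O3) = ↑SO2 ∪ (fun x => negI * Rpi e1 e1_unit * x) '' ↑SO2)
    (m : ℕ) (hm : 2 ≤ m) (heven : Even m) (g : O3) (h2 : axisV g 2 = 0) :
    Γ ⊓ conjS g (HZ (Subgroup.zpowers (Rz (2 * Real.pi / (m : ℝ))))) =
      conjS g (Subgroup.zpowers (negI * Rz Real.pi)) := by
  have hunit := axisV_unit g
  ext x
  rw [mem_inter_iff hSO2 hΓ m g x, mem_conjS_iff]
  constructor
  · rintro ⟨k, ⟨rfl, hfix⟩ | ⟨rfl, hfix⟩⟩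
    · by_cases hc : Real.cos ((k : ℝ) * (2 * Real.pi / (m : ℝ))) = 1
      · exact ⟨1, Subgroup.one_mem _, by rw [Rz_eq_one_of_cos hc]⟩
      · obtain ⟨hv0, hv1⟩ := fix_analysis hfix hc
        exfalso; rw [hv0, hv1, h2] at hunit; norm_num at hunit
    · obtain ⟨_, hcase⟩ := antifix_analysis hfix
      rcases hcase with hc | ⟨hv0, hv1⟩
      · exact ⟨negI * Rz Real.pi, Subgroup.mem_zpowers _, by rw [← Rz_eq_pi_of_cos hc]⟩
      · exfalso; rw [hv0, hv1, h2] at hunit; norm_num at hunit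
  · rintro ⟨y, hy, rfl⟩
    rcases (mem_W_iff y).mp hy with rfl | rfl
    · refine ⟨0, Or.inl ⟨?_, ?_⟩⟩
      · rw [show ((0 : ℤ) : ℝ) * (2 * Real.pi / (m : ℝ)) = 0 by norm_num, Rz_zero]
      · rw [show ((0 : ℤ) : ℝ) * (2 * Real.pi / (m : ℝ)) = 0 by norm_num, RzM_mulVec]
        ext i
        fin_cases i <;> simp
    · obtain ⟨t, ht⟩ := heven
      have ht0 : (t : ℝ) ≠ 0 := by
        have : 1 ≤ t := by omega
        positivity
      have harg : ((t : ℤ) : ℝ) * (2 * Real.pi / (m : ℝ)) = Real.pi := by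
        rw [ht]
        push_cast
        field_simp
        ring
      refine ⟨(t : ℤ), Or.inr ⟨by rw [harg], ?_⟩⟩
      rw [harg, RzM_mulVec]
      ext i
      fin_cases i <;> simp [Real.cos_pi, Real.sin_pi, h2]

lemma inter_c {SO2 : Subgroup O3} (hSO2 : (SO2 : Set O3) = Set.range Rz)
    {Γ : Subgroup O3}
    (hΓ : (Γ : Set O3) = ↑SO2 ∪ (fun x => negI * Rpi e1 e1_unit * x) '' ↑SO2)
    (m : ℕ) (hm : 2 ≤ m) (g : O3)
    (h01 : ¬(axisV g 0 = 0 ∧ axisV g 1 = 0))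
    (hrest : axisV g 2 ≠ 0 ∨ ¬Even m) :
    Γ ⊓ conjS g (HZ (Subgroup.zpowers (Rz (2 * Real.pi / (m : ℝ))))) = ⊥ := by
  ext x
  rw [mem_inter_iff hSO2 hΓ m g x, Subgroup.mem_bot]
  constructor
  · rintro ⟨k, ⟨rfl, hfix⟩ | ⟨rfl, hfix⟩⟩
    · by_cases hc : Real.cos ((k : ℝ) * (2 * Real.pi / (m : ℝ))) = 1
      · rw [Rz_eq_one_of_cos hc]; group
      · exact absurd (fix_analysis hfix hc) h01
    · obtain ⟨hz2, hcase⟩ := antifix_analysis hfix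
      rcases hrest with hv2 | hodd
      · exact absurd hz2 hv2
      · rcases hcase with hc | h01'
        · exact absurd hc (odd_no_cos_neg_one hm hodd k)
        · exact absurd h01' h01
  · rintro rfl
    refine ⟨0, Or.inl ⟨?_, ?_⟩⟩
    · rw [show ((0 : ℤ) : ℝ) * (2 * Real.pi / (m : ℝ)) = 0 by norm_num, Rz_zero]
      group
    · rw [show ((0 : ℤ) : ℝ) * (2 * Real.pi / (m : ℝ)) = 0 by norm_num, RzM_mulVec]
      ext i
      fin_cases i <;> simp
lemma axisV_eq (g : O3) (i : Fin 3) : axisV g i = (g : Matrix (Fin 3) (Fin 3) ℝ) 2 i := by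
  simp [axisV, coe_inv, Matrix.mulVec, dotProduct, Fin.sum_univ_three, e3,
    Matrix.star_eq_conjTranspose, Matrix.conjTranspose_apply]

noncomputable def u0 : Fin 3 → ℝ := ![3/5, 0, 4/5]

lemma u0_unit : u0 ⬝ᵥ u0 = 1 := by norm_num [u0, dotProduct, Fin.sum_univ_three, Matrix.cons_val_two, Matrix.tail_cons, Matrix.head_cons]

noncomputable def gGen : O3 := Rpi u0 u0_unit

lemma axisV_gGen0 : axisV gGen 0 = 24 / 25 := by
  rw [axisV_eq]
  show RpiM u0 2 0 = _
  simp [RpiM, Matrix.vecMulVec_apply, u0, Matrix.one_apply]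
  norm_num

lemma axisV_gGen2 : axisV gGen 2 = 7 / 25 := by
  rw [axisV_eq]
  show RpiM u0 2 2 = _
  simp [RpiM, Matrix.vecMulVec_apply, u0, Matrix.one_apply]
  norm_num

noncomputable def gSwap : O3 :=
  ⟨!![0, 0, 1; 0, 1, 0; 1, 0, 0], by
    constructor <;>
      · ext i j
        fin_cases i <;> fin_cases j <;>
          simp [Matrix.mul_apply, Fin.sum_univ_three, Matrix.star_apply,
            Matrix.one_apply] <;> rfl⟩

lemma axisV_gSwap2 : axisV gSwap 2 = 0 := by
  rw [axisV_eq]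
  show (!![(0:ℝ), 0, 1; 0, 1, 0; 1, 0, 0]) 2 2 = 0
  rfl


lemma axisV_one0 : axisV (1 : O3) 0 = 0 := by
  rw [axisV_eq]
  show (1 : Matrix (Fin 3) (Fin 3) ℝ) 2 0 = 0
  simp [Matrix.one_apply]

lemma axisV_one1 : axisV (1 : O3) 1 = 0 := by
  rw [axisV_eq]
  show (1 : Matrix (Fin 3) (Fin 3) ℝ) 2 1 = 0
  simp [Matrix.one_apply]
/-- For the type III subgroup `O(2)⁻ = SO(2) ∪ (-R(e₁,π))SO(2)` and
`m ≥ 2`: `[O(2)⁻] ⊚ [Zₘ ⊕ Z₂ᶜ]` consists of `[1]`, `[Zₘ]` and, when `m` is even,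
`[Z₂⁻] = [{I, -R(e₃,π)}]`. -/
theorem clips_O2Minus_Zm (m : ℕ) (hm : 2 ≤ m)
    (SO2 : Subgroup O3) (hSO2 : (SO2 : Set O3) = Set.range Rz)
    (Γ : Subgroup O3)
    (hΓ : (Γ : Set O3) = ↑SO2 ∪ (fun x => negI * Rpi e1 e1_unit * x) '' ↑SO2) :
    clips Γ (HZ (Subgroup.zpowers (Rz (2 * Real.pi / (m : ℝ))))) =
      if Even m then
        {cclass (⊥ : Subgroup O3), cclass (Subgroup.zpowers (Rz (2 * Real.pi / (m : ℝ)))),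
          cclass (Subgroup.zpowers (negI * Rz Real.pi))}
      else
        {cclass (⊥ : Subgroup O3), cclass (Subgroup.zpowers (Rz (2 * Real.pi / (m : ℝ))))} := by
  ext S
  simp only [clips, Set.mem_range]
  constructor
  · rintro ⟨g, rfl⟩
    by_cases h01 : axisV g 0 = 0 ∧ axisV g 1 = 0
    · rw [inter_a hSO2 hΓ m g h01.1 h01.2, cclass_conjS]
      split_ifs <;> simp
    · by_cases h2 : axisV g 2 = 0
      · by_cases heven : Even m
        · rw [inter_b hSO2 hΓ m hm heven g h2, cclass_conjS, if_pos heven]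
          simp
        · rw [inter_c hSO2 hΓ m hm g h01 (Or.inr heven), if_neg heven]
          simp
      · rw [inter_c hSO2 hΓ m hm g h01 (Or.inl h2)]
        split_ifs <;> simp
  · intro hS
    have hgen01 : ¬(axisV gGen 0 = 0 ∧ axisV gGen 1 = 0) := by
      rintro ⟨h, -⟩
      rw [axisV_gGen0] at h
      norm_num at h
    have hgen2 : axisV gGen 2 ≠ 0 := by
      rw [axisV_gGen2]; norm_num
    split_ifs at hS with heven
    · simp only [Set.mem_insert_iff, Set.mem_singleton_iff] at hS
      rcases hS with rfl | rfl | rfl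
      · exact ⟨gGen, by rw [inter_c hSO2 hΓ m hm gGen hgen01 (Or.inl hgen2)]⟩
      · exact ⟨1, by rw [inter_a hSO2 hΓ m 1 axisV_one0 axisV_one1, cclass_conjS]⟩
      · exact ⟨gSwap, by rw [inter_b hSO2 hΓ m hm heven gSwap axisV_gSwap2, cclass_conjS]⟩
    · simp only [Set.mem_insert_iff, Set.mem_singleton_iff] at hS
      rcases hS with rfl | rfl
      · exact ⟨gGen, by rw [inter_c hSO2 hΓ m hm gGen hgen01 (Or.inl hgen2)]⟩
      · exact ⟨1, by rw [inter_a hSO2 hΓ m 1 axisV_one0 axisV_one1, cclass_conjS]⟩
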